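/- Let F : K → L be a tensor-triangulated functor between essentially small tensor-triangulated categories. If F is essentially surjective, then the induced map Spc(F) : Spc(L) → Spc(K) on Balmer spectra is a topological embedding (a homeomorphism onto its image). -/
import Mathlib


/-!
STATEMENT 19: An essentially surjective tt-functor F : K → L between essentially small
tt-categories induces a topological embedding Spc(F) : Spc(L) → Spc(K), Q ↦ F⁻¹(Q).
-/

open CategoryTheory CategoryTheory.Limits CategoryTheory.Pretriangulated
  CategoryTheory.MonoidalCategory Opposite

universe v u v₂ u₂

namespace TTPaper

section SmallTT

variable (K : Type u) [Category.{v} K] [Preadditive K] [HasZeroObject K]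
  [MonoidalCategory K] [SymmetricCategory K]
  [HasShift K ℤ] [∀ n : ℤ, (shiftFunctor K n).Additive] [Pretriangulated K]
  [HasBinaryBiproducts K]

/-- A prime thick tensor-ideal of an essentially small tt-category `K`:
a proper thick tensor-ideal `P` such that `a ⊗ b ∈ P` implies `a ∈ P` or `b ∈ P`. -/
structure IsPrimeSm (P : Set K) : Prop where
  zero_mem : ∀ a : K, IsZero a → a ∈ P
  iso_closed : ∀ {a b : K}, a ∈ P → (a ≅ b) → b ∈ P
  shift_mem : ∀ a ∈ P, ∀ n : ℤ, (shiftFunctor K n).obj a ∈ P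
  summand_mem : ∀ a b : K, (a ⊞ b) ∈ P → a ∈ P
  ext_mem : ∀ Tr : Triangle K, (Tr ∈ distTriang K) →
    Tr.obj₁ ∈ P → Tr.obj₃ ∈ P → Tr.obj₂ ∈ P
  ideal : ∀ a ∈ P, ∀ b : K, a ⊗ b ∈ P
  proper : P ≠ Set.univ
  prime : ∀ a b : K, a ⊗ b ∈ P → a ∈ P ∨ b ∈ P

/-- The Balmer spectrum of the essentially small tt-category `K`. -/
def SpcSm : Type u := {P : Set K // IsPrimeSm K P}

/-- The Balmer topology on `Spc(K)`: generated by the complements `{P : c ∈ P}` of the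
basic closed subsets `supp(c) = {P : c ∉ P}`. -/
instance : TopologicalSpace (SpcSm K) :=
  TopologicalSpace.generateFrom
    {U : Set (SpcSm K) | ∃ c : K, U = {P : SpcSm K | c ∈ P.1}}

end SmallTT

/-- If a tt-functor `F : K → L` between essentially small tt-categories is essentially
surjective then the induced map `Spc(F) : Spc(L) → Spc(K)`, `Q ↦ F⁻¹(Q)`, is a
topological embedding. -/
theorem spc_map_embedding_of_essSurj
    (K : Type u) [Category.{v} K] [Preadditive K] [HasZeroObject K]
    [MonoidalCategory K] [SymmetricCategory K]
    [HasShift K ℤ] [∀ n : ℤ, (shiftFunctor K n).Additive] [Pretriangulated K]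
    [HasBinaryBiproducts K]
    (L : Type u₂) [Category.{v₂} L] [Preadditive L] [HasZeroObject L]
    [MonoidalCategory L] [SymmetricCategory L]
    [HasShift L ℤ] [∀ n : ℤ, (shiftFunctor L n).Additive] [Pretriangulated L]
    [HasBinaryBiproducts L]
    (hK : EssentiallySmall.{v} K) (hL : EssentiallySmall.{v₂} L)
    -- a tt-functor: an exact symmetric monoidal functor
    (F : K ⥤ L) [F.Additive] [F.Monoidal] [F.CommShift ℤ] [F.IsTriangulated]
    -- which is essentially surjective
    (hsurj : F.EssSurj)
    -- the induced map `Spc(F) : Spc(L) → Spc(K)`, `Q ↦ F⁻¹(Q)`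
    (φ : SpcSm L → SpcSm K)
    (hφdef : ∀ Q : SpcSm L, (φ Q).1 = F.obj ⁻¹' Q.1) :
    Topology.IsEmbedding φ := by
  constructor
  · -- inducing
    constructor
    show (instTopologicalSpaceSpcSm L) = TopologicalSpace.induced φ (instTopologicalSpaceSpcSm K)
    rw [show instTopologicalSpaceSpcSm K = TopologicalSpace.generateFrom
        {U : Set (SpcSm K) | ∃ c : K, U = {P : SpcSm K | c ∈ P.1}} from rfl,
      induced_generateFrom_eq]
    have hset : Set.preimage φ '' {U : Set (SpcSm K) | ∃ c : K, U = {P : SpcSm K | c ∈ P.1}}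
        = {U : Set (SpcSm L) | ∃ c : L, U = {Q : SpcSm L | c ∈ Q.1}} := ?_
    · rw [hset]; rfl
    ext U
    constructor
    · rintro ⟨V, ⟨a, rfl⟩, rfl⟩
      refine ⟨F.obj a, ?_⟩
      ext Q
      simp only [Set.mem_preimage, Set.mem_setOf_eq, hφdef Q]
    · rintro ⟨c, rfl⟩
      obtain ⟨a, ⟨e⟩⟩ : ∃ a : K, Nonempty (F.obj a ≅ c) := hsurj.mem_essImage c
      refine ⟨{P : SpcSm K | a ∈ P.1}, ⟨a, rfl⟩, ?_⟩
      ext Q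
      simp only [Set.mem_preimage, Set.mem_setOf_eq, hφdef Q]
      exact ⟨fun h => Q.2.iso_closed h e, fun h => Q.2.iso_closed h e.symm⟩
  · -- injective
    intro Q Q' h
    apply Subtype.ext
    ext c
    obtain ⟨a, ⟨e⟩⟩ : ∃ a : K, Nonempty (F.obj a ≅ c) := hsurj.mem_essImage c
    have h1 : a ∈ (φ Q).1 ↔ a ∈ (φ Q').1 := by rw [h]
    rw [hφdef, hφdef] at h1
    constructor
    · intro hc
      exact Q'.2.iso_closed (h1.mp (Q.2.iso_closed hc e.symm)) e
    · intro hc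
      exact Q.2.iso_closed (h1.mpr (Q'.2.iso_closed hc e.symm)) e

end TTPaper
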